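/- For all real z, 1 + z + z² ≥ exp(min(z, 1)). -/
import Mathlib


/-- For all real z, 1 + z + z² ≥ exp(min(z,1)). -/
theorem one_add_self_add_sq_ge_exp_min (z : ℝ) : Real.exp (min z 1) ≤ 1 + z + z ^ 2 := by
  rcases le_total 1 z with h | h
  · rw [min_eq_right h]
    have := Real.exp_one_lt_d9
    nlinarith [sq_nonneg (z - 1)]
  · rw [min_eq_left h]
    rcases le_total z (-1) with h2 | h2
    · have h3 : Real.exp z ≤ Real.exp (-1) := Real.exp_le_exp.mpr h2
      have h4 : Real.exp (-1) < 1 := Real.exp_lt_one_iff.mpr (by norm_num)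
      nlinarith [mul_nonneg (neg_nonneg.mpr (by linarith : z + 1 ≤ 0))
        (neg_nonneg.mpr (by linarith : z ≤ 0))]
    · have habs : |z| ≤ 1 := abs_le.mpr ⟨h2, h⟩
      have hb := Real.exp_bound habs (by norm_num : 0 < 2)
      have hsum : ∑ i ∈ Finset.range 2, z ^ i / (Nat.factorial i : ℝ) = 1 + z := by
        simp [Finset.sum_range_succ, Nat.factorial]
      rw [hsum] at hb
      have := abs_le.mp hb
      have hz2 : |z| ^ 2 = z ^ 2 := sq_abs z
      norm_num at this
      nlinarith [sq_nonneg z]
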